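/- Let U = {(H, l_H) : ∅ ≠ H ⊆ V, l_H ∈ I_H*} and let x : U → ℝ be arbitrary. Define the square matrix A indexed by T × T with entries A((D,i_D),(C,j_C)) = [C ⊆ D and (i_D)_C = j_C] − Σ_{(H,l_H)∈U : C ⊆ H, (l_H)_C = j_C} x(H, l_H), where [·] denotes the indicator. Then det A = 1 − Σ_{(H,l_H)∈U} x(H, l_H) · Σ_{F∈𝒟, F⊆H} (−1)^{|F|−1}. -/

import Mathlib

open Finset MeasureTheory

/-- The cell equal to `i` on `F` and to the baseline `b` off `F`. -/
def cellOn {V : Type} [DecidableEq V] {I : V → Type} (b : ∀ γ, I γ)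
    (F : Finset V) (i : ∀ γ, I γ) : ∀ γ, I γ :=
  fun γ => if γ ∈ F then i γ else b γ

/-- The support of a cell: the set of coordinates that are off baseline. -/
def cellSupport {V : Type} [Fintype V] [DecidableEq V] {I : V → Type}
    [∀ γ, DecidableEq (I γ)] (b : ∀ γ, I γ) (j : ∀ γ, I γ) : Finset V :=
  Finset.univ.filter (fun γ => j γ ≠ b γ)

/-- A generating class: a nonempty collection of nonempty subsets of `V` closed
under nonempty subsets. -/
def IsGenClass {V : Type} [DecidableEq V] (𝒟 : Finset (Finset V)) : Prop :=
  𝒟.Nonempty ∧ (∀ D ∈ 𝒟, D ≠ ∅) ∧ ∀ D ∈ 𝒟, ∀ F ⊆ D, F ≠ ∅ → F ∈ 𝒟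

/-- The index set `T = {(D, i_D) : D ∈ 𝒟, i_D ∈ I_D*}`; a tuple `i_D ∈ I_D*` is
represented by the unique cell whose support is exactly `D`. -/
def TParam {V : Type} [Fintype V] [DecidableEq V] (I : V → Type)
    [∀ γ, DecidableEq (I γ)] (b : ∀ γ, I γ) (𝒟 : Finset (Finset V)) : Type :=
  {x : Finset V × (∀ γ, I γ) // x.1 ∈ 𝒟 ∧ cellSupport b x.2 = x.1}

noncomputable instance {V : Type} [Fintype V] [DecidableEq V] (I : V → Type)
    [∀ γ, Fintype (I γ)] [∀ γ, DecidableEq (I γ)] (b : ∀ γ, I γ)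
    (𝒟 : Finset (Finset V)) : Fintype (TParam I b 𝒟) := by
  unfold TParam; infer_instance

instance {V : Type} [Fintype V] [DecidableEq V] (I : V → Type)
    [∀ γ, DecidableEq (I γ)] (b : ∀ γ, I γ)
    (𝒟 : Finset (Finset V)) : DecidableEq (TParam I b 𝒟) := by
  unfold TParam; infer_instance

/-- The exponent `Σ_{F ∈ 𝒟, F ⊆ S(j)} θ(F, j_F)` of the hierarchical model. -/
noncomputable def energy {V : Type} [Fintype V] [DecidableEq V] {I : V → Type}
    [∀ γ, Fintype (I γ)] [∀ γ, DecidableEq (I γ)] (b : ∀ γ, I γ)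
    (𝒟 : Finset (Finset V)) (θ : TParam I b 𝒟 → ℝ) (j : ∀ γ, I γ) : ℝ :=
  ∑ t : TParam I b 𝒟, if t.1.2 = cellOn b t.1.1 j then θ t else 0

/-- The partition function `Z(θ)`. -/
noncomputable def Zfun {V : Type} [Fintype V] [DecidableEq V] {I : V → Type}
    [∀ γ, Fintype (I γ)] [∀ γ, DecidableEq (I γ)] (b : ∀ γ, I γ)
    (𝒟 : Finset (Finset V)) (θ : TParam I b 𝒟 → ℝ) : ℝ :=
  ∑ j : (∀ γ, I γ), Real.exp (energy b 𝒟 θ j)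

/-- The log-partition function `k(θ) = log Z(θ)`. -/
noncomputable def kfun {V : Type} [Fintype V] [DecidableEq V] {I : V → Type}
    [∀ γ, Fintype (I γ)] [∀ γ, DecidableEq (I γ)] (b : ∀ γ, I γ)
    (𝒟 : Finset (Finset V)) (θ : TParam I b 𝒟 → ℝ) : ℝ :=
  Real.log (Zfun b 𝒟 θ)

/-- The hierarchical log-linear probability function `p_θ`. -/
noncomputable def phier {V : Type} [Fintype V] [DecidableEq V] {I : V → Type}
    [∀ γ, Fintype (I γ)] [∀ γ, DecidableEq (I γ)] (b : ∀ γ, I γ)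
    (𝒟 : Finset (Finset V)) (θ : TParam I b 𝒟 → ℝ) (j : ∀ γ, I γ) : ℝ :=
  Real.exp (energy b 𝒟 θ j) / Zfun b 𝒟 θ

/-- The index set `U = {(H, l_H) : ∅ ≠ H ⊆ V, l_H ∈ I_H*}`; a tuple `l_H ∈ I_H*` is
represented by the unique cell whose support is exactly `H`. -/
def UParam {V : Type} [Fintype V] [DecidableEq V] (I : V → Type)
    [∀ γ, DecidableEq (I γ)] (b : ∀ γ, I γ) : Type :=
  {x : Finset V × (∀ γ, I γ) // x.1 ≠ ∅ ∧ cellSupport b x.2 = x.1}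

noncomputable instance {V : Type} [Fintype V] [DecidableEq V] (I : V → Type)
    [∀ γ, Fintype (I γ)] [∀ γ, DecidableEq (I γ)] (b : ∀ γ, I γ) :
    Fintype (UParam I b) := by
  unfold UParam; infer_instance

/-!
Write `A = B - 𝟙 yᵀ`, where `B` is the zeta matrix of the subcell order on `T` (unitriangular
once `T` is graded by `|D|`) and `y (C, j_C) = Σ_{(H, l_H) ⊒ (C, j_C)} x (H, l_H)`. Because `𝒟` is
closed under nonempty subsets, `w (C, j_C) = (-1)^(|C|-1)` solves `B w = 𝟙`: this is the
alternating sum over the nonempty subsets of `D`. Hence `A = B (1 - w yᵀ)`, so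
`det A = 1 - y ⬝ w`, and exchanging the two sums in `y ⬝ w` gives the right-hand side.
-/

open Matrix

namespace Matrix

variable {m α R : Type*} [Fintype m] [DecidableEq m] [CommRing R]

lemma BlockTriangular.det_eq_one [LinearOrder α] {M : Matrix m m R} {b : m → α}
    (hM : M.BlockTriangular b) (hdiag : ∀ i j, b i = b j → M i j = (1 : Matrix m m R) i j) :
    M.det = 1 := by
  rw [hM.det]
  refine prod_eq_one fun a _ => ?_
  have hblock : M.toSquareBlock b a = 1 := by
    ext i j
    rw [toSquareBlock_def, of_apply, hdiag _ _ (i.2.trans j.2.symm)]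
    simp only [one_apply, Subtype.ext_iff]
  rw [hblock, det_one]

lemma det_sub_replicateCol_mulVec_mul_replicateRow (B : Matrix m m R) (w y : m → R) :
    det (B - replicateCol Unit (B *ᵥ w) * replicateRow Unit y) = det B * (1 - y ⬝ᵥ w) := by
  have hfactor : B - replicateCol Unit (B *ᵥ w) * replicateRow Unit y
      = B * (1 + replicateCol Unit (-w) * replicateRow Unit y) := by
    rw [Matrix.mul_add, Matrix.mul_one, ← Matrix.mul_assoc, ← replicateCol_mulVec, mulVec_neg,
      sub_eq_add_neg, ← Matrix.neg_mul]
    rfl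
  rw [hfactor, det_mul, det_one_add_replicateCol_mul_replicateRow, dotProduct_neg, sub_eq_add_neg]

end Matrix

lemma sum_powerset_erase_empty_neg_one_pow_card_sub_one {α R : Type*} [DecidableEq α] [Ring R]
    {D : Finset α} (hD : D.Nonempty) : ∑ F ∈ D.powerset.erase ∅, (-1 : R) ^ (F.card - 1) = 1 := by
  have hsum : ∑ F ∈ D.powerset, (-1 : R) ^ F.card = 0 := by
    simpa using congrArg (Int.cast : ℤ → R) (sum_powerset_neg_one_pow_card_of_nonempty hD)
  rw [← add_sum_erase _ _ (empty_mem_powerset D), card_empty, pow_zero] at hsum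
  have hshift : ∀ F ∈ D.powerset.erase ∅, (-1 : R) ^ (F.card - 1) = -(-1 : R) ^ F.card := by
    intro F hF
    obtain ⟨k, hk⟩ := Nat.exists_eq_succ_of_ne_zero (card_ne_zero.2
      (nonempty_iff_ne_empty.2 (ne_of_mem_erase hF)))
    rw [hk, pow_succ]
    simp
  rw [sum_congr rfl hshift, sum_neg_distrib]
  exact neg_eq_of_add_eq_zero_left hsum

lemma IsGenClass.filter_subset_eq {V : Type} [DecidableEq V] {𝒟 : Finset (Finset V)}
    (h𝒟 : IsGenClass 𝒟) {D : Finset V} (hD : D ∈ 𝒟) : 𝒟.filter (· ⊆ D) = D.powerset.erase ∅ := by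
  ext F
  simp only [mem_filter, mem_erase, mem_powerset]
  exact ⟨fun ⟨hF, hFD⟩ => ⟨h𝒟.2.1 F hF, hFD⟩, fun ⟨hF, hFD⟩ => ⟨h𝒟.2.2 D hD F hFD hF, hFD⟩⟩

section Cells

variable {V : Type} {I : V → Type}

/-- `IsSubcell c p` is the paper's `C ⊆ H ∧ (l_H)_C = j_C` for `c = (C, j_C)`, `p = (H, l_H)`. -/
def IsSubcell (c p : Finset V × (∀ γ, I γ)) : Prop :=
  c.1 ⊆ p.1 ∧ ∀ γ ∈ c.1, p.2 γ = c.2 γ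

lemma IsSubcell.refl (c : Finset V × (∀ γ, I γ)) : IsSubcell c c :=
  ⟨Subset.rfl, fun _ _ => rfl⟩

variable [Fintype V] [DecidableEq V] [∀ γ, DecidableEq (I γ)] (b : ∀ γ, I γ)

-- Declared under `[Fintype V]`, so that it is the instance `det_A_eq` elaborates for the
-- same proposition (bounded `∀` decided through `Fintype V`).
instance (c p : Finset V × (∀ γ, I γ)) : Decidable (IsSubcell c p) :=
  inferInstanceAs (Decidable (_ ∧ _))

@[simp]
lemma mem_cellSupport {j : ∀ γ, I γ} {γ : V} : γ ∈ cellSupport b j ↔ j γ ≠ b γ := by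
  simp [cellSupport]

lemma cellSupport_cellOn {F : Finset V} {j : ∀ γ, I γ} (hF : F ⊆ cellSupport b j) :
    cellSupport b (cellOn b F j) = F := by
  ext γ
  by_cases hγ : γ ∈ F
  · simpa [cellOn, hγ] using hF hγ
  · simp [cellOn, hγ]

variable {b} {𝒟 : Finset (Finset V)}

lemma TParam.eq_of_isSubcell {c t : TParam I b 𝒟} (hct : IsSubcell c.1 t.1)
    (hcard : t.1.1.card ≤ c.1.1.card) : c = t := by
  have hsupp : c.1.1 = t.1.1 := eq_of_subset_of_card_le hct.1 hcard
  refine Subtype.ext (Prod.ext hsupp (funext fun γ => ?_))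
  by_cases hγ : γ ∈ c.1.1
  · exact (hct.2 γ hγ).symm
  · have hγ' : γ ∉ t.1.1 := hsupp ▸ hγ
    rw [← c.2.2, mem_cellSupport, not_not] at hγ
    rw [← t.2.2, mem_cellSupport, not_not] at hγ'
    rw [hγ, hγ']

variable [∀ γ, Fintype (I γ)]

lemma sum_isSubcell_eq_sum_filter_subset {M : Type*} [AddCommMonoid M]
    {p : Finset V × (∀ γ, I γ)} (hp : p.1 ⊆ cellSupport b p.2) (f : Finset V → M) :
    ∑ c : TParam I b 𝒟, (if IsSubcell c.1 p then f c.1.1 else 0)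
      = ∑ F ∈ 𝒟.filter (· ⊆ p.1), f F := by
  rw [← sum_filter]
  refine sum_bij' (fun c _ => c.1.1)
    (fun F hF => ⟨(F, cellOn b F p.2), (mem_filter.1 hF).1,
      cellSupport_cellOn b ((mem_filter.1 hF).2.trans hp)⟩)
    (fun c hc => mem_filter.2 ⟨c.2.1, (mem_filter.1 hc).2.1⟩) ?_ ?_ (fun _ _ => rfl)
    (fun _ _ => rfl)
  · intro F hF
    refine mem_filter.2 ⟨mem_univ _, (mem_filter.1 hF).2, fun γ hγ => ?_⟩
    simp [cellOn, hγ]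
  · intro c hc
    refine TParam.eq_of_isSubcell (t := c) ⟨Subset.rfl, fun γ hγ => ?_⟩ le_rfl
    simpa [cellOn, hγ] using ((mem_filter.1 hc).2.2 γ hγ).symm

variable (b 𝒟) {R : Type*} [CommRing R]

lemma sum_sum_isSubcell_mul (x : UParam I b → R) (f : Finset V → R) :
    ∑ c : TParam I b 𝒟, (∑ u : UParam I b, if IsSubcell c.1 u.1 then x u else 0) * f c.1.1
      = ∑ u : UParam I b, x u * ∑ F ∈ 𝒟.filter (· ⊆ u.1.1), f F := by
  simp_rw [sum_mul, ite_mul, zero_mul]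
  rw [sum_comm]
  refine sum_congr rfl fun u _ => ?_
  rw [← sum_isSubcell_eq_sum_filter_subset u.2.2.ge, mul_sum]
  refine sum_congr rfl fun c _ => ?_
  split_ifs <;> simp

def zetaMatrix : Matrix (TParam I b 𝒟) (TParam I b 𝒟) R :=
  Matrix.of fun t c => if IsSubcell c.1 t.1 then 1 else 0

lemma det_zetaMatrix : (zetaMatrix b 𝒟 : Matrix _ _ R).det = 1 := by
  refine BlockTriangular.det_eq_one (b := fun t => OrderDual.toDual t.1.1.card)
    (fun t c hlt => ?_) (fun t c heq => ?_)
  · have hlt : t.1.1.card < c.1.1.card := hlt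
    exact if_neg fun hct => (card_le_card hct.1).not_gt hlt
  · by_cases hct : IsSubcell c.1 t.1
    · rw [TParam.eq_of_isSubcell hct (OrderDual.toDual_inj.1 heq).le]
      simp [zetaMatrix, IsSubcell.refl]
    · have hne : t ≠ c := fun h => hct (h ▸ IsSubcell.refl _)
      simp [zetaMatrix, hct, hne]

lemma zetaMatrix_mulVec_neg_one_pow (h𝒟 : IsGenClass 𝒟) :
    zetaMatrix b 𝒟 *ᵥ (fun c => (-1 : R) ^ (c.1.1.card - 1)) = 1 := by
  funext t
  change ∑ c, zetaMatrix b 𝒟 t c * (-1 : R) ^ (c.1.1.card - 1) = 1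
  simp only [zetaMatrix, of_apply, ite_mul, one_mul, zero_mul]
  refine (sum_isSubcell_eq_sum_filter_subset t.2.2.ge fun F => (-1 : R) ^ (F.card - 1)).trans ?_
  rw [h𝒟.filter_subset_eq t.2.1, sum_powerset_erase_empty_neg_one_pow_card_sub_one
    (nonempty_iff_ne_empty.2 (h𝒟.2.1 _ t.2.1))]

end Cells

/-- The determinant of the matrix `A` with entries
`A((D,i_D),(C,j_C)) = [C ⊆ D ∧ (i_D)_C = j_C] − Σ_{(H,l_H)∈U : C⊆H, (l_H)_C=j_C} x(H,l_H)`
equals `1 − Σ_{(H,l_H)∈U} x(H,l_H) Σ_{F∈𝒟, F⊆H} (−1)^{|F|−1}`. -/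
theorem det_A_eq {V : Type} [Fintype V] [DecidableEq V]
    {I : V → Type} [∀ γ, Fintype (I γ)] [∀ γ, DecidableEq (I γ)]
    (b : ∀ γ, I γ) (𝒟 : Finset (Finset V)) (h𝒟 : IsGenClass 𝒟)
    (x : UParam I b → ℝ) :
    Matrix.det (Matrix.of (fun (t c : TParam I b 𝒟) =>
      (if c.1.1 ⊆ t.1.1 ∧ (∀ γ ∈ c.1.1, t.1.2 γ = c.1.2 γ) then (1 : ℝ) else 0) -
        ∑ u : UParam I b,
          if c.1.1 ⊆ u.1.1 ∧ (∀ γ ∈ c.1.1, u.1.2 γ = c.1.2 γ) then x u else 0))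
    = 1 - ∑ u : UParam I b, x u * ∑ F ∈ 𝒟.filter (· ⊆ u.1.1), (-1 : ℝ) ^ (F.card - 1) := by
  set w : TParam I b 𝒟 → ℝ := fun c => (-1) ^ (c.1.1.card - 1)
  set y : TParam I b 𝒟 → ℝ := fun c => ∑ u : UParam I b, if IsSubcell c.1 u.1 then x u else 0
  calc _ = (zetaMatrix b 𝒟 - replicateCol Unit (zetaMatrix b 𝒟 *ᵥ w)
          * replicateRow Unit y).det := by
        rw [zetaMatrix_mulVec_neg_one_pow b 𝒟 h𝒟]
        congr 1
        ext t c
        simp only [zetaMatrix, y, Matrix.sub_apply, of_apply, mul_apply, replicateCol_apply,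
          replicateRow_apply, Pi.one_apply, one_mul, Fintype.sum_unique]
        rfl
    _ = 1 - y ⬝ᵥ w := by
        rw [det_sub_replicateCol_mulVec_mul_replicateRow, det_zetaMatrix, one_mul]
    _ = _ := by
        congr 1
        exact sum_sum_isSubcell_mul b 𝒟 x fun F => (-1) ^ (F.card - 1)
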